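/- Let A be a finite nonempty set of positive integers, let τ be a nonempty consecutive pattern (a word over a partially ordered alphabet), and let s ≥ 0. Then in ℚ⟦x,y⟧ the generating function for compositions with exactly s non-overlapping occurrences of τ satisfies: Σ_{n,m≥0} |{ σ ∈ C_{n;m}^A : τ-nlap(σ) = s }| x^n y^m = C_τ^A(x,y) · [ ( y·Σ_{a∈A} x^a − 1 )·C_τ^A(x,y) + 1 ]^s. -/

import Mathlib

/-!
Call a word a block if τ occurs in it only as its final factor. A word σ with
τ-nlap(σ) = s + 1 is uniquely a block followed by a word with τ-nlap = s: the block is the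
shortest prefix of σ containing τ, and since every occurrence in σ ends at or after the end
of that prefix, a maximum non-overlapping family uses at most one occurrence starting inside
it, while the block's own occurrence can always be added. So, with B the series of blocks, the
series for τ-nlap = s is C·B^s. Removing the last letter of a nonempty word leaves a
τ-avoider exactly when the word is a block or a nonempty τ-avoider, so
C · y∑ₐ xᵃ = B + (C − 1).
-/

/-- A composition of `n` with `m` parts, all parts in `A`. -/
def IsCompOf (A : Finset ℕ) (n m : ℕ) (σ : List ℕ) : Prop :=
  (∀ x ∈ σ, x ∈ A) ∧ σ.sum = n ∧ σ.length = m

/-- An occurrence, starting at position `i`, of the consecutive pattern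
`p : Fin ℓ → α` (a word over a partially ordered alphabet `α`) in `σ`. -/
def OccAt {α : Type*} [PartialOrder α] {ℓ : ℕ} (p : Fin ℓ → α)
    (σ : List ℕ) (i : ℕ) : Prop :=
  i + ℓ ≤ σ.length ∧ ∀ s t : Fin ℓ,
    (p s < p t → σ.getD (i + s) 0 < σ.getD (i + t) 0) ∧
    (p s = p t → σ.getD (i + s) 0 = σ.getD (i + t) 0)

/-- `σ` avoids the consecutive pattern `p`. -/
def AvoidsPat {α : Type*} [PartialOrder α] {ℓ : ℕ} (p : Fin ℓ → α)
    (σ : List ℕ) : Prop :=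
  ∀ i : ℕ, ¬ OccAt p σ i

/-- `τ-nlap σ`: the maximum number of pairwise non-overlapping occurrences of the
consecutive pattern `p` in `σ` (occurrences overlap iff they share a position). -/
noncomputable def nlap {α : Type*} [PartialOrder α] {ℓ : ℕ} (p : Fin ℓ → α)
    (σ : List ℕ) : ℕ :=
  sSup {k : ℕ | ∃ S : Finset ℕ, S.card = k ∧ (∀ i ∈ S, OccAt p σ i) ∧
    ∀ i ∈ S, ∀ j ∈ S, i ≠ j → i + ℓ ≤ j ∨ j + ℓ ≤ i}

section

variable {α : Type*} [PartialOrder α] {ℓ : ℕ} {p : Fin ℓ → α}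

section Occurrences

theorem occAt_append_left_iff {u v : List ℕ} {i : ℕ} (h : i + ℓ ≤ u.length) :
    OccAt p (u ++ v) i ↔ OccAt p u i := by
  have hget (s : Fin ℓ) : (u ++ v).getD (i + s) 0 = u.getD (i + s) 0 :=
    List.getD_append _ _ _ _ (by omega)
  simp only [OccAt, hget, List.length_append]
  exact and_congr (iff_of_true (by omega) h) Iff.rfl

theorem occAt_append_right_iff {u v : List ℕ} {i : ℕ} :
    OccAt p (u ++ v) (u.length + i) ↔ OccAt p v i := by
  have hget (s : Fin ℓ) : (u ++ v).getD (u.length + i + s) 0 = v.getD (i + s) 0 := by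
    rw [List.getD_append_right _ _ _ _ (by omega)]
    congr 1
    omega
  simp only [OccAt, hget, List.length_append]
  exact and_congr (by omega) Iff.rfl

theorem avoidsPat_nil (hℓ : 0 < ℓ) : AvoidsPat p ([] : List ℕ) := by
  rintro i ⟨h, -⟩
  simp only [List.length_nil] at h
  omega

theorem AvoidsPat.of_prefix {u v : List ℕ} (hv : AvoidsPat p v) (huv : u <+: v) :
    AvoidsPat p u := by
  obtain ⟨t, rfl⟩ := huv
  exact fun i hi => hv i ((occAt_append_left_iff hi.1).2 hi)

end Occurrences

section Blocks

/-- The pattern occurs in a block, but only at its very end. -/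
def IsBlock (p : Fin ℓ → α) (σ : List ℕ) : Prop :=
  σ ≠ [] ∧ AvoidsPat p σ.dropLast ∧ ¬ AvoidsPat p σ

theorem IsBlock.length_le_add {d w : List ℕ} {i : ℕ} (hd : IsBlock p d)
    (h : OccAt p (d ++ w) i) : d.length ≤ i + ℓ := by
  by_contra hlt
  have hlen : i + ℓ ≤ d.dropLast.length := by
    rw [List.length_dropLast]
    omega
  rw [← List.dropLast_append_getLast hd.1, List.append_assoc, occAt_append_left_iff hlen] at h
  exact hd.2.1 i h

theorem IsBlock.eq_of_append_eq {d d' w w' : List ℕ} (hd : IsBlock p d) (hd' : IsBlock p d')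
    (h : d ++ w = d' ++ w') : d = d' := by
  have key {d d' w w' : List ℕ} (hd : IsBlock p d) (hd' : IsBlock p d') (h : d ++ w = d' ++ w') :
      d'.length ≤ d.length := by
    obtain ⟨i, hi⟩ : ∃ i, OccAt p d i := by simpa [AvoidsPat] using hd.2.2
    have := hd'.length_le_add (h ▸ (occAt_append_left_iff (v := w) hi.1).2 hi)
    have := hi.1
    omega
  exact List.append_inj_left h (le_antisymm (key hd' hd h.symm) (key hd hd' h))

theorem exists_isBlock_append (hℓ : 0 < ℓ) {σ : List ℕ} (h : ¬ AvoidsPat p σ) :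
    ∃ d w, σ = d ++ w ∧ IsBlock p d := by
  classical
  have hex : ∃ k, ¬ AvoidsPat p (σ.take k) := ⟨σ.length, by rwa [List.take_length]⟩
  have hk := Nat.find_spec hex
  have hkle : Nat.find hex ≤ σ.length := Nat.find_min' hex (by rwa [List.take_length])
  have hnil : σ.take (Nat.find hex) ≠ [] := fun hnil => hk (hnil ▸ avoidsPat_nil hℓ)
  have hk0 : Nat.find hex ≠ 0 := fun h0 => hnil (by rw [h0, List.take_zero])
  refine ⟨_, _, (List.take_append_drop (Nat.find hex) σ).symm, hnil, ?_, hk⟩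
  have hmin := Nat.find_min hex (m := Nat.find hex - 1) (by omega)
  rw [not_not] at hmin
  refine hmin.of_prefix ?_
  simp [List.dropLast_eq_take, List.take_take, hkle]

end Blocks

section Packings

def IsPacking (p : Fin ℓ → α) (σ : List ℕ) (S : Finset ℕ) : Prop :=
  (∀ i ∈ S, OccAt p σ i) ∧ (S : Set ℕ).Pairwise fun i j => i + ℓ ≤ j ∨ j + ℓ ≤ i

theorem IsPacking.mono {σ : List ℕ} {S T : Finset ℕ} (hS : IsPacking p σ S) (hT : T ⊆ S) :
    IsPacking p σ T :=
  ⟨fun i hi => hS.1 i (hT hi), hS.2.mono (Finset.coe_subset.2 hT)⟩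

theorem IsPacking.insert {σ : List ℕ} {S : Finset ℕ} {i : ℕ} (hS : IsPacking p σ S)
    (hi : OccAt p σ i) (hiS : ∀ j ∈ S, i + ℓ ≤ j) : IsPacking p σ (insert i S) := by
  refine ⟨Finset.forall_mem_insert _ _ _ |>.2 ⟨hi, hS.1⟩, ?_⟩
  rw [Finset.coe_insert, Set.pairwise_insert]
  exact ⟨hS.2, fun j hj _ => ⟨.inl (hiS j hj), .inr (hiS j hj)⟩⟩

theorem isPacking_append_map_iff {u v : List ℕ} {S : Finset ℕ} :
    IsPacking p (u ++ v) (S.map (addLeftEmbedding u.length)) ↔ IsPacking p v S := by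
  rw [IsPacking, IsPacking, Finset.coe_map,
    (addLeftEmbedding u.length).injective.injOn.pairwise_image]
  simp only [Set.Pairwise, Function.onFun, Finset.forall_mem_map, addLeftEmbedding_apply,
    occAt_append_right_iff, add_assoc, add_le_add_iff_left, ne_eq]

theorem IsPacking.card_le_length (hℓ : 0 < ℓ) {σ : List ℕ} {S : Finset ℕ}
    (hS : IsPacking p σ S) : S.card ≤ σ.length := by
  have hsub : S ⊆ Finset.range σ.length := fun i hi => by
    have := (hS.1 i hi).1
    rw [Finset.mem_range]
    omega
  simpa using Finset.card_le_card hsub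

theorem bddAbove_card_isPacking (hℓ : 0 < ℓ) (σ : List ℕ) :
    BddAbove {k | ∃ S, S.card = k ∧ IsPacking p σ S} :=
  ⟨σ.length, by
    rintro k ⟨S, rfl, hS⟩
    exact hS.card_le_length hℓ⟩

theorem IsPacking.card_le_nlap (hℓ : 0 < ℓ) {σ : List ℕ} {S : Finset ℕ}
    (hS : IsPacking p σ S) : S.card ≤ nlap p σ :=
  le_csSup (bddAbove_card_isPacking hℓ σ) ⟨S, rfl, hS⟩

theorem exists_isPacking_card_eq_nlap (hℓ : 0 < ℓ) (σ : List ℕ) :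
    ∃ S, IsPacking p σ S ∧ S.card = nlap p σ := by
  obtain ⟨S, hcard, hS⟩ :=
    Nat.sSup_mem (s := {k | ∃ S, S.card = k ∧ IsPacking p σ S})
      ⟨0, ∅, rfl, by simp [IsPacking]⟩
      (bddAbove_card_isPacking hℓ σ)
  exact ⟨S, hS, hcard⟩

theorem nlap_eq_zero_iff (hℓ : 0 < ℓ) {σ : List ℕ} : nlap p σ = 0 ↔ AvoidsPat p σ := by
  constructor
  · intro h i hi
    have hsingle : IsPacking p σ {i} := ⟨by simpa using hi, by simp⟩
    have := hsingle.card_le_nlap hℓ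
    simp [h] at this
  · intro h
    obtain ⟨S, hS, hcard⟩ := exists_isPacking_card_eq_nlap (p := p) hℓ σ
    rw [← hcard, Finset.card_eq_zero, Finset.eq_empty_iff_forall_notMem]
    exact fun i hi => h i (hS.1 i hi)

theorem IsBlock.nlap_append (hℓ : 0 < ℓ) {d : List ℕ} (hd : IsBlock p d) (w : List ℕ) :
    nlap p (d ++ w) = nlap p w + 1 := by
  classical
  apply le_antisymm
  · obtain ⟨S, hS, hcard⟩ := exists_isPacking_card_eq_nlap (p := p) hℓ (d ++ w)
    rw [← hcard, ← Finset.card_filter_add_card_filter_not (d.length ≤ ·)]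
    gcongr
    · set T := S.filter (d.length ≤ ·)
      have hT : (T.image (· - d.length)).map (addLeftEmbedding d.length) = T := by
        ext i
        simp only [Finset.mem_map, Finset.mem_image, addLeftEmbedding_apply]
        constructor
        · rintro ⟨_, ⟨j, hj, rfl⟩, rfl⟩
          rwa [Nat.add_sub_cancel' (Finset.mem_filter.1 hj).2]
        · exact fun hi =>
            ⟨i - d.length, ⟨i, hi, rfl⟩, Nat.add_sub_cancel' (Finset.mem_filter.1 hi).2⟩
      have hpack : IsPacking p w (T.image (· - d.length)) :=
        isPacking_append_map_iff.1 (by rw [hT]; exact hS.mono (Finset.filter_subset _ _))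
      calc T.card = (T.image (· - d.length)).card :=
            (congrArg Finset.card hT).symm.trans (Finset.card_map _)
        _ ≤ nlap p w := hpack.card_le_nlap hℓ
    · refine Finset.card_le_one.2 fun i hi j hj => ?_
      rw [Finset.mem_filter] at hi hj
      have hi' := hd.length_le_add (hS.1 i hi.1)
      have hj' := hd.length_le_add (hS.1 j hj.1)
      by_contra hij
      rcases hS.2 hi.1 hj.1 hij with h | h <;> omega
  · obtain ⟨S, hS, hcard⟩ := exists_isPacking_card_eq_nlap (p := p) hℓ w
    obtain ⟨i, hi⟩ : ∃ i, OccAt p d i := by simpa [AvoidsPat] using hd.2.2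
    have hiS : ∀ j ∈ S.map (addLeftEmbedding d.length), i + ℓ ≤ j := by
      simp only [Finset.forall_mem_map, addLeftEmbedding_apply]
      exact fun j _ => hi.1.trans (Nat.le_add_right _ _)
    have hpack := (isPacking_append_map_iff.2 hS).insert ((occAt_append_left_iff hi.1).2 hi) hiS
    have := hpack.card_le_nlap hℓ
    rwa [Finset.card_insert_of_notMem (fun h => by have := hiS i h; omega), Finset.card_map,
      hcard] at this

theorem nlap_eq_succ_iff (hℓ : 0 < ℓ) {σ : List ℕ} {k : ℕ} :
    nlap p σ = k + 1 ↔ ∃ d w, σ = d ++ w ∧ IsBlock p d ∧ nlap p w = k := by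
  constructor
  · intro h
    have hocc : ¬ AvoidsPat p σ := fun hσ => by simp [(nlap_eq_zero_iff hℓ).2 hσ] at h
    obtain ⟨d, w, rfl, hd⟩ := exists_isBlock_append hℓ hocc
    exact ⟨d, w, rfl, hd, by rw [hd.nlap_append hℓ] at h; omega⟩
  · rintro ⟨d, w, rfl, hd, rfl⟩
    exact hd.nlap_append hℓ w

end Packings

section Series

open MvPowerSeries

theorem IsCompOf.append {A : Finset ℕ} {n m n' m' : ℕ} {u v : List ℕ} (hu : IsCompOf A n m u)
    (hv : IsCompOf A n' m' v) : IsCompOf A (n + n') (m + m') (u ++ v) := by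
  obtain ⟨huA, rfl, rfl⟩ := hu
  obtain ⟨hvA, rfl, rfl⟩ := hv
  refine ⟨fun x hx => ?_, List.sum_append, List.length_append⟩
  rcases List.mem_append.1 hx with hx | hx
  exacts [huA x hx, hvA x hx]

theorem finite_setOf_isCompOf (A : Finset ℕ) (n m : ℕ) : {σ | IsCompOf A n m σ}.Finite := by
  refine ((List.finite_length_eq (α := A) m).image (List.map Subtype.val)).subset ?_
  rintro σ ⟨hA, -, hm⟩
  lift σ to List A using hA
  exact ⟨σ, by simpa using hm, rfl⟩

theorem finite_setOf_isCompOf_and (A : Finset ℕ) (P : List ℕ → Prop) (n m : ℕ) :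
    {σ | IsCompOf A n m σ ∧ P σ}.Finite :=
  (finite_setOf_isCompOf A n m).subset fun _ h => h.1

theorem finsupp_fin_two_eq_iff {d : Fin 2 →₀ ℕ} {n m : ℕ} :
    d = Finsupp.single 0 n + Finsupp.single 1 m ↔ d 0 = n ∧ d 1 = m := by
  simp [Finsupp.ext_iff, Fin.forall_fin_two]

/-- The generating series `∑ |{σ ∈ C^A_{n;m} : P σ}| x^n y^m`, with `x = X 0`, `y = X 1`. -/
noncomputable def compSeries (A : Finset ℕ) (P : List ℕ → Prop) : MvPowerSeries (Fin 2) ℚ :=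
  fun d => ({σ | IsCompOf A (d 0) (d 1) σ ∧ P σ}.ncard : ℚ)

variable {A : Finset ℕ}

theorem coeff_compSeries (P : List ℕ → Prop) (d : Fin 2 →₀ ℕ) :
    coeff d (compSeries A P) = ({σ | IsCompOf A (d 0) (d 1) σ ∧ P σ}.ncard : ℚ) :=
  coeff_apply _ _

theorem eq_compSeries {F : MvPowerSeries (Fin 2) ℚ} {P : List ℕ → Prop}
    (hF : ∀ n m : ℕ, coeff (Finsupp.single 0 n + Finsupp.single 1 m) F =
      ({σ | IsCompOf A n m σ ∧ P σ}.ncard : ℚ)) :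
    F = compSeries A P := by
  ext d
  rw [coeff_compSeries, ← hF, ← finsupp_fin_two_eq_iff.2 ⟨rfl, rfl⟩]

theorem compSeries_or {P Q : List ℕ → Prop} (hPQ : ∀ σ, P σ → ¬ Q σ) :
    compSeries A (fun σ => P σ ∨ Q σ) = compSeries A P + compSeries A Q := by
  ext d
  simp only [coeff_compSeries, map_add, and_or_left, Set.ofPred_or]
  rw [Set.ncard_union_eq (Set.disjoint_left.2 fun σ hP hQ => hPQ σ hP.2 hQ.2)
    (finite_setOf_isCompOf_and A P _ _) (finite_setOf_isCompOf_and A Q _ _), Nat.cast_add]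

theorem compSeries_mul {P Q R : List ℕ → Prop}
    (hR : ∀ σ, R σ ↔ ∃ u v, σ = u ++ v ∧ P u ∧ Q v)
    (huniq : ∀ u v u' v', P u → Q v → P u' → Q v' → u ++ v = u' ++ v' → u = u') :
    compSeries A R = compSeries A P * compSeries A Q := by
  classical
  set F := fun (P : List ℕ → Prop) (e : Fin 2 →₀ ℕ) =>
    (finite_setOf_isCompOf_and A P (e 0) (e 1)).toFinset
  have hcoeff (P : List ℕ → Prop) (e : Fin 2 →₀ ℕ) :
      coeff e (compSeries A P) = ((F P e).card : ℚ) := by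
    rw [coeff_compSeries, Set.ncard_eq_toFinset_card _ (finite_setOf_isCompOf_and A P _ _)]
  ext d
  simp only [coeff_mul, hcoeff, ← Nat.cast_mul, ← Nat.cast_sum, ← Finset.card_product,
    ← Finset.card_sigma]
  congr 1
  symm
  refine Finset.card_bij (fun x _ => x.2.1 ++ x.2.2) ?_ ?_ ?_
  · rintro ⟨e, u, v⟩ hx
    simp only [F, Finset.mem_sigma, Finset.mem_product, Set.Finite.mem_toFinset,
      Set.mem_ofPred_eq, Finset.HasAntidiagonal.mem_antidiagonal] at hx ⊢
    obtain ⟨rfl, ⟨hu', hu⟩, hv', hv⟩ := hx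
    exact ⟨by simpa using hu'.append hv', (hR _).2 ⟨u, v, rfl, hu, hv⟩⟩
  · rintro ⟨⟨e₁, e₂⟩, u, v⟩ hx ⟨⟨e₁', e₂'⟩, u', v'⟩ hx' h
    simp only [F, Finset.mem_sigma, Finset.mem_product, Set.Finite.mem_toFinset,
      Set.mem_ofPred_eq] at hx hx' h
    obtain ⟨-, ⟨⟨-, hus, hul⟩, hu⟩, ⟨-, hvs, hvl⟩, hv⟩ := hx
    obtain ⟨-, ⟨⟨-, hus', hul'⟩, hu'⟩, ⟨-, hvs', hvl'⟩, hv'⟩ := hx'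
    obtain rfl := huniq u v u' v' hu hv hu' hv' h
    obtain rfl := List.append_cancel_left h
    obtain rfl : e₁ = e₁' :=
      Finsupp.ext <| Fin.forall_fin_two.2 ⟨hus.symm.trans hus', hul.symm.trans hul'⟩
    obtain rfl : e₂ = e₂' :=
      Finsupp.ext <| Fin.forall_fin_two.2 ⟨hvs.symm.trans hvs', hvl.symm.trans hvl'⟩
    rfl
  · rintro σ hσ
    simp only [F, Set.Finite.mem_toFinset, Set.mem_ofPred_eq] at hσ
    obtain ⟨⟨hA, hs, hl⟩, hRσ⟩ := hσ
    obtain ⟨u, v, rfl, hu, hv⟩ := (hR σ).1 hRσ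
    refine ⟨⟨(Finsupp.single 0 u.sum + Finsupp.single 1 u.length,
      Finsupp.single 0 v.sum + Finsupp.single 1 v.length), u, v⟩, ?_, rfl⟩
    simp only [F, Finset.mem_sigma, Finset.mem_product, Set.Finite.mem_toFinset, Set.mem_ofPred_eq,
      Finset.HasAntidiagonal.mem_antidiagonal]
    refine ⟨?_, ⟨⟨fun x hx => hA x (List.mem_append_left _ hx), by simp, by simp⟩, hu⟩,
      ⟨fun x hx => hA x (List.mem_append_right _ hx), by simp, by simp⟩, hv⟩
    ext i
    fin_cases i <;> simp [← hs, ← hl]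

theorem compSeries_eq_nil : compSeries A (· = []) = 1 := by
  ext d
  rw [coeff_compSeries, coeff_one]
  split_ifs with hd
  · subst hd
    rw [show {σ | IsCompOf A _ _ σ ∧ σ = []} = {[]} from
      Set.ext fun σ => ⟨And.right, fun (h : σ = []) => ⟨by simp [h, IsCompOf], h⟩⟩]
    simp
  · rw [show {σ | IsCompOf A (d 0) (d 1) σ ∧ σ = []} = ∅ by
      ext σ
      simp only [Set.mem_ofPred_eq, Set.mem_empty_iff_false, iff_false, not_and]
      rintro ⟨-, hs, hl⟩ rfl
      exact hd (by ext i; fin_cases i <;> simp [← hs, ← hl])]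
    simp

theorem compSeries_length_eq_one :
    compSeries A (·.length = 1) = X 1 * ∑ a ∈ A, X 0 ^ a := by
  classical
  ext d
  have hX (a : ℕ) : (X 1 * X 0 ^ a : MvPowerSeries (Fin 2) ℚ) =
      monomial (Finsupp.single 0 a + Finsupp.single 1 1) 1 := by
    rw [X_pow_eq, X_def, monomial_mul_monomial, one_mul, add_comm]
  have hset : {σ | IsCompOf A (d 0) (d 1) σ ∧ σ.length = 1} =
      ↑((A.filter fun a => d = Finsupp.single 0 a + Finsupp.single 1 1).image ([·])) := by
    ext σ
    simp only [Set.mem_ofPred_eq, Finset.coe_image, Finset.coe_filter, Set.mem_image,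
      List.length_eq_one_iff, finsupp_fin_two_eq_iff, IsCompOf]
    constructor
    · rintro ⟨⟨hA, hs, hl⟩, a, rfl⟩
      simp only [List.sum_singleton, List.length_singleton] at hs hl
      exact ⟨a, ⟨hA a (List.mem_singleton_self a), hs.symm, hl.symm⟩, rfl⟩
    · rintro ⟨a, ⟨ha, hs, hl⟩, rfl⟩
      exact ⟨⟨by simpa using ha, by simpa using hs.symm, by simpa using hl.symm⟩, a, rfl⟩
  rw [coeff_compSeries, hset, Set.ncard_coe_finset,
    Finset.card_image_of_injective _ List.singleton_injective, Finset.mul_sum, map_sum]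
  simp [hX, coeff_monomial]

theorem compSeries_isBlock (hℓ : 0 < ℓ) :
    compSeries A (IsBlock p) =
      (X 1 * ∑ a ∈ A, X 0 ^ a - 1) * compSeries A (AvoidsPat p) + 1 := by
  have hC : compSeries A (AvoidsPat p) =
      compSeries A (fun σ => σ ≠ [] ∧ AvoidsPat p σ) + compSeries A (· = []) := by
    rw [← compSeries_or fun σ h => h.1]
    congr
    ext σ
    by_cases hσ : σ = []
    · simp [hσ, avoidsPat_nil hℓ]
    · simp [hσ]
  have hsplit : compSeries A (fun σ => σ ≠ [] ∧ AvoidsPat p σ.dropLast) =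
      compSeries A (IsBlock p) + compSeries A (fun σ => σ ≠ [] ∧ AvoidsPat p σ) := by
    rw [← compSeries_or fun σ h h' => h.2.2 h'.2]
    congr
    ext σ
    have := fun h : AvoidsPat p σ => h.of_prefix σ.dropLast_prefix
    unfold IsBlock
    tauto
  have hconcat : compSeries A (fun σ => σ ≠ [] ∧ AvoidsPat p σ.dropLast) =
      compSeries A (AvoidsPat p) * compSeries A (·.length = 1) := by
    refine compSeries_mul (fun σ => ⟨fun ⟨hσ, h⟩ => ?_, ?_⟩)
      fun u v u' v' _ hv _ hv' h => List.append_inj_left' h (hv.trans hv'.symm)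
    · exact ⟨σ.dropLast, [σ.getLast hσ], (List.dropLast_append_getLast hσ).symm, h, rfl⟩
    · rintro ⟨u, v, rfl, hu, hv⟩
      obtain ⟨a, rfl⟩ := List.length_eq_one_iff.1 hv
      simpa using hu
  rw [compSeries_eq_nil] at hC
  rw [compSeries_length_eq_one] at hconcat
  linear_combination hconcat - hsplit + hC

theorem compSeries_nlap_eq (hℓ : 0 < ℓ) (s : ℕ) :
    compSeries A (nlap p · = s) = compSeries A (AvoidsPat p) * compSeries A (IsBlock p) ^ s := by
  induction s with
  | zero => simp only [nlap_eq_zero_iff hℓ, pow_zero, mul_one]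
  | succ k ih =>
    rw [compSeries_mul (P := IsBlock p) (Q := (nlap p · = k)) (fun σ => nlap_eq_succ_iff hℓ)
      fun u v u' v' hu _ hu' _ h => hu.eq_of_append_eq hu' h, ih]
    ring

end Series

end

open MvPowerSeries in
theorem stmt16_general {α : Type*} [PartialOrder α] {ℓ : ℕ} (hℓ : 0 < ℓ) (p : Fin ℓ → α)
    (A : Finset ℕ) (s : ℕ)
    (H C : MvPowerSeries (Fin 2) ℚ)
    (hH : ∀ n m : ℕ,
      (MvPowerSeries.coeff (R := ℚ) (Finsupp.single 0 n + Finsupp.single 1 m)) H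
        = (Set.ncard {σ : List ℕ | IsCompOf A n m σ ∧ nlap p σ = s} : ℚ))
    (hC : ∀ n m : ℕ,
      (MvPowerSeries.coeff (R := ℚ) (Finsupp.single 0 n + Finsupp.single 1 m)) C
        = (Set.ncard {σ : List ℕ | IsCompOf A n m σ ∧ AvoidsPat p σ} : ℚ)) :
    H = C * (((X 1 : MvPowerSeries (Fin 2) ℚ) * (∑ a ∈ A, (X 0) ^ a) - 1) * C + 1) ^ s := by
  rw [eq_compSeries hH, eq_compSeries hC, compSeries_nlap_eq hℓ, compSeries_isBlock hℓ]

open MvPowerSeries in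
theorem stmt16 {α : Type*} [PartialOrder α] {ℓ : ℕ} (hℓ : 0 < ℓ) (p : Fin ℓ → α)
    (A : Finset ℕ) (hA : A.Nonempty) (hpos : ∀ a ∈ A, 0 < a) (s : ℕ)
    (H C : MvPowerSeries (Fin 2) ℚ)
    (hH : ∀ n m : ℕ,
      (MvPowerSeries.coeff (R := ℚ) (Finsupp.single 0 n + Finsupp.single 1 m)) H
        = (Set.ncard {σ : List ℕ | IsCompOf A n m σ ∧ nlap p σ = s} : ℚ))
    (hC : ∀ n m : ℕ,
      (MvPowerSeries.coeff (R := ℚ) (Finsupp.single 0 n + Finsupp.single 1 m)) C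
        = (Set.ncard {σ : List ℕ | IsCompOf A n m σ ∧ AvoidsPat p σ} : ℚ)) :
    H = C * (((X 1 : MvPowerSeries (Fin 2) ℚ) * (∑ a ∈ A, (X 0) ^ a) - 1) * C + 1) ^ s :=
  stmt16_general hℓ p A s H C hH hC
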